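/- The complement of a hypersphere in S^l (l ≥ 2) has exactly two connected components, each homeomorphic to an open l-ball. -/

import Mathlib

/-!
Write `f = ‖f‖ ⟪v, ·⟫` with `‖v‖ = 1`; since the hypersphere `f = c` has two points, `|c| < ‖f‖`.
Its complement in the sphere is the disjoint union of the caps `f < c` and `f > c`, both relatively
open. Stereographic projection from the pole `v` satisfies
`‖p x‖² = 4 (1 + ⟪v, x⟫) / (1 - ⟪v, x⟫)`, which is increasing in `⟪v, x⟫`, so it maps the cap
`⟪v, x⟫ < t` (`-1 < t < 1`) onto a ball of positive radius. Each cap is therefore homeomorphic to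
an open ball, hence connected, hence a whole connected component.
-/

open Set Metric Module
open scoped RealInnerProductSpace

section Sphere

variable {E : Type*} [NormedAddCommGroup E] [InnerProductSpace ℝ E]

lemma norm_orthogonalProjection_orthogonal_span_singleton_sq {v : E} (hv : ‖v‖ = 1) (x : E) :
    ‖(ℝ ∙ v)ᗮ.orthogonalProjectionOnto x‖ ^ 2 = ‖x‖ ^ 2 - ⟪v, x⟫ ^ 2 := by
  have h := Submodule.norm_sq_eq_add_norm_sq_starProjection x (ℝ ∙ v)
  rw [Submodule.starProjection_unit_singleton ℝ hv, norm_smul, hv, Real.norm_eq_abs, mul_one,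
    sq_abs] at h
  exact eq_sub_of_add_eq' h.symm

lemma norm_stereoToFun_sq {v x : E} (hv : ‖v‖ = 1) (hx : ‖x‖ = 1) (hvx : ⟪v, x⟫ < 1) :
    ‖stereoToFun v x‖ ^ 2 = 4 * (1 + ⟪v, x⟫) / (1 - ⟪v, x⟫) := by
  have hpos : 0 < 1 - ⟪v, x⟫ := sub_pos.mpr hvx
  rw [stereoToFun_apply, norm_smul, mul_pow,
    norm_orthogonalProjection_orthogonal_span_singleton_sq hv, hx, Real.norm_eq_abs, sq_abs,
    innerSL_apply_apply]
  field_simp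
  ring

lemma abs_inner_lt_one_of_inner_eq {v x y : E} (hv : ‖v‖ = 1) (hx : ‖x‖ = 1) (hy : ‖y‖ = 1)
    (hxy : x ≠ y) (h : ⟪v, x⟫ = ⟪v, y⟫) : |⟪v, x⟫| < 1 := by
  refine (abs_real_inner_le_norm v x).trans_eq (by rw [hv, hx, one_mul]) |>.lt_of_ne fun h1 => ?_
  rcases (abs_eq zero_le_one).mp h1 with h1 | h1
  · have hvx := (inner_eq_one_iff_of_norm_eq_one hv hx).mp h1
    have hvy := (inner_eq_one_iff_of_norm_eq_one hv hy).mp (h ▸ h1)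
    exact hxy (hvx.symm.trans hvy)
  · have hvx := (inner_eq_neg_one_iff_of_norm_eq_one hv hx).mp h1
    have hvy := (inner_eq_neg_one_iff_of_norm_eq_one hv hy).mp (h ▸ h1)
    exact hxy (neg_inj.mp (hvx.symm.trans hvy))

variable {n : ℕ} [Fact (finrank ℝ E = n + 1)]

lemma norm_stereographic'_apply (v x : sphere (0 : E) 1) :
    ‖stereographic' n v x‖ = ‖stereoToFun (v : E) x‖ := by
  simp only [stereographic', OpenPartialHomeomorph.coe_trans, Function.comp_apply,
    Homeomorph.toOpenPartialHomeomorph_apply, LinearIsometryEquiv.coe_toHomeomorph,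
    LinearIsometryEquiv.norm_map]
  rfl

lemma inner_lt_one_of_ne {v x : sphere (0 : E) 1} (hx : x ≠ v) : ⟪(v : E), x⟫ < 1 :=
  (real_inner_le_one_of_norm_eq_one (norm_eq_of_mem_sphere v) (norm_eq_of_mem_sphere x)).lt_of_ne
    fun h => hx (Subtype.ext ((inner_eq_one_iff_of_norm_eq_one (norm_eq_of_mem_sphere v)
      (norm_eq_of_mem_sphere x)).mp h).symm)

lemma setOf_inner_lt_subset_compl (v : sphere (0 : E) 1) {t : ℝ} (ht : t ≤ 1) :
    {x : sphere (0 : E) 1 | ⟪(v : E), x⟫ < t} ⊆ {v}ᶜ := by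
  rintro x hx rfl
  simp only [mem_ofPred_eq, real_inner_self_eq_norm_sq, norm_eq_of_mem_sphere] at hx
  linarith

lemma norm_stereographic'_lt_iff {v x : sphere (0 : E) 1} (hx : x ≠ v) {t : ℝ} (ht : t < 1) :
    ‖stereographic' n v x‖ < √(4 * (1 + t) / (1 - t)) ↔ ⟪(v : E), x⟫ < t := by
  have hvx := inner_lt_one_of_ne hx
  rw [norm_stereographic'_apply, Real.lt_sqrt (norm_nonneg _),
    norm_stereoToFun_sq (norm_eq_of_mem_sphere v) (norm_eq_of_mem_sphere x) hvx,
    div_lt_div_iff₀ (sub_pos.mpr hvx) (sub_pos.mpr ht)]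
  constructor <;> intro h <;> linarith

lemma image_stereographic'_setOf_inner_lt (v : sphere (0 : E) 1) {t : ℝ} (ht : t < 1) :
    stereographic' n v '' {x | ⟪(v : E), x⟫ < t} = ball 0 √(4 * (1 + t) / (1 - t)) := by
  ext y
  constructor
  · rintro ⟨x, hxt, rfl⟩
    exact mem_ball_zero_iff.mpr
      ((norm_stereographic'_lt_iff (setOf_inner_lt_subset_compl v ht.le hxt) ht).mpr hxt)
  · intro hy
    have hy' : y ∈ (stereographic' n v).target := by simp
    refine ⟨(stereographic' n v).symm y, ?_, (stereographic' n v).right_inv hy'⟩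
    have hx : (stereographic' n v).symm y ≠ v := by
      simpa using (stereographic' n v).map_target hy'
    refine (norm_stereographic'_lt_iff (n := n) hx ht).mp ?_
    rw [(stereographic' n v).right_inv hy']
    exact mem_ball_zero_iff.mp hy

theorem nonempty_homeomorph_sphere_inter_inner_lt_ball {v : E} (hv : ‖v‖ = 1) {t : ℝ}
    (ht₀ : -1 < t) (ht₁ : t < 1) :
    Nonempty ({x ∈ sphere (0 : E) 1 | ⟪v, x⟫ < t} ≃ₜ ball (0 : EuclideanSpace ℝ (Fin n)) 1) := by
  set v' : sphere (0 : E) 1 := ⟨v, by simp [hv]⟩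
  set A : Set (sphere (0 : E) 1) := {x | ⟪(v' : E), x⟫ < t}
  have hA : A ⊆ (stereographic' n v').source := by
    rw [stereographic'_source]
    exact setOf_inner_lt_subset_compl v' ht₁.le
  have hr : 0 < √(4 * (1 + t) / (1 - t)) :=
    Real.sqrt_pos.mpr (div_pos (by linarith) (by linarith))
  have hC : {x ∈ sphere (0 : E) 1 | ⟪v, x⟫ < t} = Subtype.val '' A :=
    (Subtype.image_preimage_coe _ _).symm
  exact ⟨(Homeomorph.setCongr hC).trans <|
    (Topology.IsEmbedding.subtypeVal.homeomorphImage A).symm.trans <|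
    ((stereographic' n v').homeomorphOfImageSubsetSource hA
      (image_stereographic'_setOf_inner_lt v' ht₁)).trans
    (OpenPartialHomeomorph.unitBallBall 0 _ hr).toHomeomorphSourceTarget.symm⟩

end Sphere

section Hyperplane

variable {E : Type*} [NormedAddCommGroup E] [InnerProductSpace ℝ E] [CompleteSpace E]

lemma ContinuousLinearMap.exists_norm_eq_one_apply_eq_norm_mul_inner {f : E →L[ℝ] ℝ}
    (hf : f ≠ 0) :
    ∃ v : E, ‖v‖ = 1 ∧ ∀ x, f x = ‖f‖ * ⟪v, x⟫ := by
  set u := (InnerProductSpace.toDual ℝ E).symm f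
  have hu : ‖u‖ = ‖f‖ := LinearIsometryEquiv.norm_map _ f
  have hu0 : u ≠ 0 := by simpa [u] using hf
  refine ⟨‖u‖⁻¹ • u, norm_smul_inv_norm hu0, fun x => ?_⟩
  rw [real_inner_smul_left, ← mul_assoc, hu, mul_inv_cancel₀ (hu ▸ norm_ne_zero_iff.mpr hu0),
    one_mul, InnerProductSpace.toDual_symm_apply]

lemma abs_lt_norm_of_nontrivial {f : E →L[ℝ] ℝ} (hf : f ≠ 0) {c : ℝ}
    (h : {x ∈ sphere (0 : E) 1 | f x = c}.Nontrivial) : |c| < ‖f‖ := by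
  obtain ⟨v, hv, hfv⟩ := f.exists_norm_eq_one_apply_eq_norm_mul_inner hf
  obtain ⟨x, ⟨hx, rfl⟩, y, ⟨hy, hfy⟩, hxy⟩ := h
  rw [mem_sphere_zero_iff_norm] at hx hy
  have hf₀ : 0 < ‖f‖ := norm_pos_iff.mpr hf
  rw [hfv x, hfv y, mul_right_inj' hf₀.ne'] at hfy
  rw [hfv x, abs_mul, abs_of_pos hf₀]
  exact mul_lt_of_lt_one_right hf₀ (abs_inner_lt_one_of_inner_eq hv hx hy hxy hfy.symm)

theorem nonempty_homeomorph_sphere_inter_lt_ball {n : ℕ} [Fact (finrank ℝ E = n + 1)]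
    (f : E →L[ℝ] ℝ) {c : ℝ} (hc : |c| < ‖f‖) :
    Nonempty ({x ∈ sphere (0 : E) 1 | f x < c} ≃ₜ ball (0 : EuclideanSpace ℝ (Fin n)) 1) := by
  have hf₀ : 0 < ‖f‖ := (abs_nonneg c).trans_lt hc
  obtain ⟨v, hv, hfv⟩ := f.exists_norm_eq_one_apply_eq_norm_mul_inner (norm_pos_iff.mp hf₀)
  have hcap : {x ∈ sphere (0 : E) 1 | f x < c} = {x ∈ sphere (0 : E) 1 | ⟪v, x⟫ < c / ‖f‖} := by
    ext x
    simp only [mem_sep_iff, hfv, lt_div_iff₀ hf₀, mul_comm]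
  obtain ⟨hc₀, hc₁⟩ := abs_lt.mp hc
  rw [hcap]
  exact nonempty_homeomorph_sphere_inter_inner_lt_ball hv
    ((lt_div_iff₀ hf₀).mpr (by linarith)) ((div_lt_one hf₀).mpr hc₁)

end Hyperplane

lemma connectedComponentIn_eq_inter_of_subset_union {X : Type*} [TopologicalSpace X]
    {s O O' : Set X} {x : X} (hO : IsOpen O) (hO' : IsOpen O') (hd : Disjoint O O')
    (hs : s ⊆ O ∪ O') (hc : IsPreconnected (s ∩ O)) (hx : x ∈ s ∩ O) :
    connectedComponentIn s x = s ∩ O :=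
  subset_antisymm
    (subset_inter (connectedComponentIn_subset _ _)
      (isPreconnected_connectedComponentIn.subset_left_of_subset_union hO hO' hd
        ((connectedComponentIn_subset _ _).trans hs) ⟨x, mem_connectedComponentIn hx.1, hx.2⟩))
    (hc.subset_connectedComponentIn hx inter_subset_left)

lemma isConnected_of_homeomorph_ball {X E : Type*} [TopologicalSpace X] [NormedAddCommGroup E]
    [NormedSpace ℝ E] {s : Set X} (e : s ≃ₜ ball (0 : E) 1) : IsConnected s := by
  rw [isConnected_iff_connectedSpace, e.connectedSpace_iff, ← isConnected_iff_connectedSpace]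
  exact (convex_ball 0 1).isConnected (nonempty_ball.mpr one_pos)

theorem stmt8_general (l : ℕ)
    (f : EuclideanSpace ℝ (Fin (l + 1)) →L[ℝ] ℝ) (c : ℝ) (hf : f ≠ 0)
    (Sl : Set (EuclideanSpace ℝ (Fin (l + 1)))) (hSl : Sl = Metric.sphere 0 1)
    (S : Set (EuclideanSpace ℝ (Fin (l + 1)))) (hS : S = {x ∈ Sl | f x = c})
    (hne : S.Nontrivial) :
    ∃ U V : Set (EuclideanSpace ℝ (Fin (l + 1))),
      U ≠ V ∧
      (∀ x ∈ Sl \ S, connectedComponentIn (Sl \ S) x = U ∨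
        connectedComponentIn (Sl \ S) x = V) ∧
      (∃ x ∈ Sl \ S, connectedComponentIn (Sl \ S) x = U) ∧
      (∃ x ∈ Sl \ S, connectedComponentIn (Sl \ S) x = V) ∧
      Nonempty (U ≃ₜ Metric.ball (0 : EuclideanSpace ℝ (Fin l)) 1) ∧
      Nonempty (V ≃ₜ Metric.ball (0 : EuclideanSpace ℝ (Fin l)) 1) := by
  have : Fact (finrank ℝ (EuclideanSpace ℝ (Fin (l + 1))) = l + 1) := ⟨finrank_euclideanSpace_fin⟩
  subst hSl hS
  have hc := abs_lt_norm_of_nontrivial hf hne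
  set D := sphere 0 1 \ {x ∈ sphere 0 1 | f x = c}
  have hU : D ∩ {x | c < f x} = {x ∈ sphere 0 1 | (-f) x < -c} := by
    ext x
    simp only [D, mem_inter_iff, mem_sdiff, mem_ofPred_eq, neg_apply, neg_lt_neg_iff]
    exact ⟨fun h => ⟨h.1.1, h.2⟩, fun h => ⟨⟨h.1, fun h' => h.2.ne' h'.2⟩, h.2⟩⟩
  have hV : D ∩ {x | f x < c} = {x ∈ sphere 0 1 | f x < c} := by
    ext x
    simp only [D, mem_inter_iff, mem_sdiff, mem_ofPred_eq]
    exact ⟨fun h => ⟨h.1.1, h.2⟩, fun h => ⟨⟨h.1, fun h' => h.2.ne h'.2⟩, h.2⟩⟩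
  obtain ⟨eU⟩ := hU ▸ nonempty_homeomorph_sphere_inter_lt_ball (n := l) (-f)
    (by rwa [abs_neg, norm_neg])
  obtain ⟨eV⟩ := hV ▸ nonempty_homeomorph_sphere_inter_lt_ball (n := l) f hc
  obtain ⟨⟨xU, hxU⟩, hUc⟩ := isConnected_of_homeomorph_ball eU
  obtain ⟨⟨xV, hxV⟩, hVc⟩ := isConnected_of_homeomorph_ball eV
  have hO : IsOpen {x | c < f x} := isOpen_lt continuous_const f.continuous
  have hO' : IsOpen {x | f x < c} := isOpen_lt f.continuous continuous_const
  have hd : Disjoint {x | c < f x} {x | f x < c} :=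
    disjoint_left.mpr fun x (h : c < f x) h' => lt_asymm h h'
  have hD : D ⊆ {x | c < f x} ∪ {x | f x < c} := fun x hx =>
    (Ne.lt_or_gt fun h => hx.2 ⟨hx.1, h⟩).symm
  have hcompU x (hx : x ∈ D ∩ {x | c < f x}) :=
    connectedComponentIn_eq_inter_of_subset_union hO hO' hd hD hUc hx
  have hcompV x (hx : x ∈ D ∩ {x | f x < c}) :=
    connectedComponentIn_eq_inter_of_subset_union hO' hO hd.symm (union_comm _ _ ▸ hD) hVc hx
  refine ⟨_, _, fun h => hd.notMem_of_mem_left hxU.2 (h ▸ hxU).2, fun x hx => ?_,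
    ⟨xU, hxU.1, hcompU xU hxU⟩, ⟨xV, hxV.1, hcompV xV hxV⟩, ⟨eU⟩, ⟨eV⟩⟩
  exact (hD hx).imp (fun h => hcompU x ⟨hx, h⟩) (fun h => hcompV x ⟨hx, h⟩)

/-- The complement in `S^l` (`l ≥ 2`) of a hypersphere
(a nonempty, non-singleton intersection of `S^l` with an affine hyperplane)
has exactly two connected components, each homeomorphic to the open unit ball in `ℝ^l`. -/
theorem stmt8 (l : ℕ) (hl : 2 ≤ l)
    (f : EuclideanSpace ℝ (Fin (l + 1)) →L[ℝ] ℝ) (c : ℝ) (hf : f ≠ 0)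
    (Sl : Set (EuclideanSpace ℝ (Fin (l + 1)))) (hSl : Sl = Metric.sphere 0 1)
    (S : Set (EuclideanSpace ℝ (Fin (l + 1)))) (hS : S = {x ∈ Sl | f x = c})
    (hne : S.Nontrivial) :
    ∃ U V : Set (EuclideanSpace ℝ (Fin (l + 1))),
      U ≠ V ∧
      (∀ x ∈ Sl \ S, connectedComponentIn (Sl \ S) x = U ∨
        connectedComponentIn (Sl \ S) x = V) ∧
      (∃ x ∈ Sl \ S, connectedComponentIn (Sl \ S) x = U) ∧
      (∃ x ∈ Sl \ S, connectedComponentIn (Sl \ S) x = V) ∧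
      Nonempty (U ≃ₜ Metric.ball (0 : EuclideanSpace ℝ (Fin l)) 1) ∧
      Nonempty (V ≃ₜ Metric.ball (0 : EuclideanSpace ℝ (Fin l)) 1) :=
  stmt8_general l f c hf Sl hSl S hS hne
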